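/- arXiv:2303.11818 — 4 statements merged into one kernel-verified Lean document; each statement's English description precedes it below -/
import Mathlib

section
/- Let R be a regular local ring of mixed characteristic (0,p), where p is a prime number different from 2, such that R/pR is regular and the residue field of R is infinite. Let Q(T_1,…,T_{2^m}) be a non-degenerate m-fold Pfister form over R. Then the set S_Q of all invertible elements c ∈ R^* that are represented by Q (i.e., such that Q = c has a solution over R) is a multiplicative subgroup of the group of units R^*: it contains 1, is closed under multiplication, and is closed under taking inverses. -/
set_option linter.unusedSectionVars false
set_option maxHeartbeats 1000000

/-- A ring `A` is a regular local ring if it is a Noetherian local ring whose maximal ideal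
can be generated by `Krull-dimension`-many elements. -/
def IsRegularLocal (A : Type*) [CommRing A] : Prop :=
  IsNoetherianRing A ∧ ∃ _h : IsLocalRing A, ∃ s : Finset A,
    Ideal.span (s : Set A) = IsLocalRing.maximalIdeal A ∧
    (s.card : WithBot ℕ∞) = ringKrullDim A

/-- The `m`-fold Pfister form `⟪a 1, …, a m⟫` over `R`: the tensor product of the binary
quadratic forms `⟨1, -a i⟩`, realized as the diagonal quadratic form in `2 ^ m` variables
(indexed by `Fin m → Bool`) whose coefficient at an index `s` is `∏ _{i with s i} (-a i)`. -/
noncomputable def pfisterForm (R : Type*) [CommRing R] {m : ℕ} (a : Fin m → Rˣ) :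
    QuadraticForm R ((Fin m → Bool) → R) :=
  QuadraticMap.weightedSumSquares R
    (fun s : Fin m → Bool => ∏ i, if s i then -(a i : R) else 1)

namespace PfisterAux


variable {R : Type*} [CommRing R]

def pw {m : ℕ} (a : Fin m → Rˣ) (s : Fin m → Bool) : R :=
  ∏ i, if s i then -(a i : R) else 1

def Qf {m : ℕ} (a : Fin m → Rˣ) (x : (Fin m → Bool) → R) : R :=
  ∑ s, pw a s * (x s * x s)

def pol {m : ℕ} (a : Fin m → Rˣ) (y z : (Fin m → Bool) → R) : R :=
  ∑ s, pw a s * (2 * y s * z s)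

lemma pol_comm {m : ℕ} (a : Fin m → Rˣ) (y z : (Fin m → Bool) → R) :
    pol a y z = pol a z y :=
  Finset.sum_congr rfl fun s _ => by ring

lemma Qf_expand {m : ℕ} (a : Fin m → Rˣ) (y z : (Fin m → Bool) → R) (r : R) :
    Qf a (fun s => y s + r * z s) = Qf a y + r * pol a y z + r ^ 2 * Qf a z := by
  unfold Qf pol
  rw [Finset.mul_sum, Finset.mul_sum, ← Finset.sum_add_distrib, ← Finset.sum_add_distrib]
  exact Finset.sum_congr rfl fun s _ => by ring

lemma Qf_smul {m : ℕ} (a : Fin m → Rˣ) (r : R) (z : (Fin m → Bool) → R) :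
    Qf a (fun s => r * z s) = r ^ 2 * Qf a z := by
  unfold Qf
  rw [Finset.mul_sum]
  exact Finset.sum_congr rfl fun s _ => by ring

lemma Qf_scale_expand {m : ℕ} (a : Fin m → Rˣ) (y z : (Fin m → Bool) → R) (r q : R) :
    Qf a (fun s => r * (y s + q * z s)) =
      r ^ 2 * (Qf a y + q * pol a y z + q ^ 2 * Qf a z) := by
  rw [Qf_smul a r (fun s => y s + q * z s), Qf_expand]

def glue {m : ℕ} (y₀ y₁ : (Fin m → Bool) → R) : (Fin (m + 1) → Bool) → R :=
  fun s => if s 0 then y₁ (Fin.tail s) else y₀ (Fin.tail s)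

lemma glue_cons_false {m : ℕ} (y₀ y₁ : (Fin m → Bool) → R) :
    (fun s => glue y₀ y₁ (Fin.cons false s)) = y₀ := by
  funext s; simp [glue, Fin.tail_cons]

lemma glue_cons_true {m : ℕ} (y₀ y₁ : (Fin m → Bool) → R) :
    (fun s => glue y₀ y₁ (Fin.cons true s)) = y₁ := by
  funext s; simp [glue, Fin.tail_cons]

lemma pw_cons_true {m : ℕ} (a : Fin (m + 1) → Rˣ) (s : Fin m → Bool) :
    pw a (Fin.cons true s) = -(a 0 : R) * pw (fun i => a i.succ) s := by
  unfold pw; rw [Fin.prod_univ_succ]; simp [Fin.cons_succ]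

lemma pw_cons_false {m : ℕ} (a : Fin (m + 1) → Rˣ) (s : Fin m → Bool) :
    pw a (Fin.cons false s) = pw (fun i => a i.succ) s := by
  unfold pw; rw [Fin.prod_univ_succ]; simp [Fin.cons_succ]

lemma Qf_split {m : ℕ} (a : Fin (m + 1) → Rˣ) (x : (Fin (m + 1) → Bool) → R) :
    Qf a x = Qf (fun i => a i.succ) (fun s => x (Fin.cons false s))
      - (a 0 : R) * Qf (fun i => a i.succ) (fun s => x (Fin.cons true s)) := by
  unfold Qf
  rw [← Fintype.sum_equiv
      (⟨fun p => Fin.cons p.1 p.2, fun s => (s 0, Fin.tail s),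
        fun p => by simp [Fin.tail_cons], fun s => by simp [Fin.cons_self_tail]⟩ :
        (Bool × (Fin m → Bool)) ≃ (Fin (m + 1) → Bool))
      (fun p => pw a (Fin.cons p.1 p.2) * (x (Fin.cons p.1 p.2) * x (Fin.cons p.1 p.2)))
      (fun s => pw a s * (x s * x s)) (fun p => rfl)]
  rw [Fintype.sum_prod_type, Fintype.sum_bool]
  simp only [pw_cons_true, pw_cons_false]
  rw [Finset.mul_sum, ← Finset.sum_sub_distrib, ← Finset.sum_add_distrib]
  exact Finset.sum_congr rfl fun s _ => by ring

lemma Qf_glue {m : ℕ} (a : Fin (m + 1) → Rˣ) (y₀ y₁ : (Fin m → Bool) → R) :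
    Qf a (glue y₀ y₁) = Qf (fun i => a i.succ) y₀ - (a 0 : R) * Qf (fun i => a i.succ) y₁ := by
  rw [Qf_split, glue_cons_false, glue_cons_true]

variable [IsLocalRing R]

lemma isUnit_iff_residue_ne_zero (z : R) :
    IsUnit z ↔ IsLocalRing.residue R z ≠ 0 := by
  constructor
  · intro h
    exact (h.map (IsLocalRing.residue R)).ne_zero
  · intro h
    by_contra hz
    exact h (Ideal.Quotient.eq_zero_iff_mem.mpr ((IsLocalRing.mem_maximalIdeal z).mpr hz))

lemma exists_transversal (hinf : Infinite (IsLocalRing.ResidueField R))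
    (α u v β β' : R) (hα : IsUnit α) (huv : IsUnit u ∨ IsUnit v) :
    ∃ t : R, IsUnit (1 - α * t ^ 2) ∧
      IsUnit (u + (α * t) * β + (α * t) ^ 2 * v) ∧
      IsUnit (v + t * β' + t ^ 2 * u) := by
  classical
  set k := IsLocalRing.ResidueField R
  set r := IsLocalRing.residue R
  set p₀ : Polynomial k := Polynomial.C 1 - Polynomial.C (r α) * Polynomial.X ^ 2 with hp₀
  set w11 : k := r α * r β with hw11
  set w12 : k := r α ^ 2 * r v with hw12
  set p₁ : Polynomial k := Polynomial.C (r u) + Polynomial.C w11 * Polynomial.X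
      + Polynomial.C w12 * Polynomial.X ^ 2 with hp₁
  set p₂ : Polynomial k := Polynomial.C (r v) + Polynomial.C (r β') * Polynomial.X
      + Polynomial.C (r u) * Polynomial.X ^ 2 with hp₂
  have hαk : r α ≠ 0 := (isUnit_iff_residue_ne_zero α).mp hα
  have h0 : p₀ ≠ 0 := fun h => by
    have := congrArg (fun q => Polynomial.coeff q 0) h
    simp [hp₀, Polynomial.coeff_sub] at this
  have hc10 : p₁.coeff 0 = r u := by
    simp [hp₁, Polynomial.coeff_add, Polynomial.coeff_C_mul, Polynomial.coeff_X_pow,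
      Polynomial.coeff_C, Polynomial.coeff_X]
  have hc12 : p₁.coeff 2 = w12 := by
    simp [hp₁, Polynomial.coeff_add, Polynomial.coeff_C_mul, Polynomial.coeff_X_pow,
      Polynomial.coeff_C, Polynomial.coeff_X]
  have hc20 : p₂.coeff 0 = r v := by
    simp [hp₂, Polynomial.coeff_add, Polynomial.coeff_C_mul, Polynomial.coeff_X_pow,
      Polynomial.coeff_C, Polynomial.coeff_X]
  have hc22 : p₂.coeff 2 = r u := by
    simp [hp₂, Polynomial.coeff_add, Polynomial.coeff_C_mul, Polynomial.coeff_X_pow,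
      Polynomial.coeff_C, Polynomial.coeff_X]
  have h1 : p₁ ≠ 0 := by
    rcases huv with hu | hv
    · intro h
      rw [h, Polynomial.coeff_zero] at hc10
      exact (isUnit_iff_residue_ne_zero u).mp hu hc10.symm
    · intro h
      rw [h, Polynomial.coeff_zero] at hc12
      rw [hw12] at hc12
      exact mul_ne_zero (pow_ne_zero 2 hαk) ((isUnit_iff_residue_ne_zero v).mp hv) hc12.symm
  have h2 : p₂ ≠ 0 := by
    rcases huv with hu | hv
    · intro h
      rw [h, Polynomial.coeff_zero] at hc22
      exact (isUnit_iff_residue_ne_zero u).mp hu hc22.symm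
    · intro h
      rw [h, Polynomial.coeff_zero] at hc20
      exact (isUnit_iff_residue_ne_zero v).mp hv hc20.symm
  have hprod : p₀ * p₁ * p₂ ≠ 0 := mul_ne_zero (mul_ne_zero h0 h1) h2
  have hfin : ({x | (p₀ * p₁ * p₂).IsRoot x}).Finite := Polynomial.finite_setOf_isRoot hprod
  obtain ⟨τ, hτ⟩ := (hfin.infinite_compl).nonempty
  have hτ' : Polynomial.eval τ (p₀ * p₁ * p₂) ≠ 0 := hτ
  rw [Polynomial.eval_mul, Polynomial.eval_mul] at hτ'
  have he0 : Polynomial.eval τ p₀ ≠ 0 := fun h => hτ' (by rw [h]; ring)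
  have he1 : Polynomial.eval τ p₁ ≠ 0 := fun h => hτ' (by rw [h]; ring)
  have he2 : Polynomial.eval τ p₂ ≠ 0 := fun h => hτ' (by rw [h]; ring)
  obtain ⟨t, ht⟩ := IsLocalRing.residue_surjective (R := R) τ
  refine ⟨t, ?_, ?_, ?_⟩
  · rw [isUnit_iff_residue_ne_zero]
    intro h
    apply he0
    rw [hp₀]
    simp only [Polynomial.eval_sub, Polynomial.eval_mul, Polynomial.eval_pow,
      Polynomial.eval_C, Polynomial.eval_X]
    rw [← ht]
    calc (1 : k) - r α * r t ^ 2 = r (1 - α * t ^ 2) := by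
          push_cast [map_sub, map_mul, map_pow, map_one]; ring
      _ = 0 := h
  · rw [isUnit_iff_residue_ne_zero]
    intro h
    apply he1
    rw [hp₁]
    simp only [Polynomial.eval_add, Polynomial.eval_mul, Polynomial.eval_pow,
      Polynomial.eval_C, Polynomial.eval_X]
    rw [← ht]
    calc r u + w11 * r t + w12 * r t ^ 2
        = r (u + (α * t) * β + (α * t) ^ 2 * v) := by
          rw [hw11, hw12]; push_cast [map_add, map_mul, map_pow]; ring
      _ = 0 := h
  · rw [isUnit_iff_residue_ne_zero]
    intro h
    apply he2
    rw [hp₂]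
    simp only [Polynomial.eval_add, Polynomial.eval_mul, Polynomial.eval_pow,
      Polynomial.eval_C, Polynomial.eval_X]
    rw [← ht]
    calc r v + r β' * r t + r u * r t ^ 2
        = r (v + t * β' + t ^ 2 * u) := by
          push_cast [map_add, map_mul, map_pow]; ring
      _ = 0 := h

/-- Main lemma: represented units of a Pfister form over a local ring with infinite residue
field are "multipliers". -/
lemma Qf_mul (hinf : Infinite (IsLocalRing.ResidueField R)) :
    ∀ (m : ℕ) (a : Fin m → Rˣ) (c : R), IsUnit c → (∃ x, Qf a x = c) →
      ∀ z, ∃ y, Qf a y = c * Qf a z := by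
  intro m
  induction m with
  | zero =>
    intro a c hc hrep z
    obtain ⟨x, hx⟩ := hrep
    refine ⟨fun s => x s * z s, ?_⟩
    have huniv : (Finset.univ : Finset (Fin 0 → Bool)) = {fun i => i.elim0} := by
      apply Finset.eq_singleton_iff_unique_mem.mpr
      exact ⟨Finset.mem_univ _, fun s _ => funext fun i => i.elim0⟩
    simp only [Qf, pw, huniv, Finset.sum_singleton, Finset.univ_eq_empty,
      Finset.prod_empty, one_mul] at hx ⊢
    linear_combination ((z fun i => i.elim0) * (z fun i => i.elim0)) * hx
  | succ m IH =>
    intro a c hc hrep z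
    obtain ⟨x, hx⟩ := hrep
    set a' : Fin m → Rˣ := fun i => a i.succ with ha'
    set α : R := ((a 0 : Rˣ) : R) with hα
    have hαu : IsUnit α := (a 0).isUnit
    have hsplit : ∀ (w : (Fin (m + 1) → Bool) → R),
        Qf a w = Qf a' (fun s => w (Fin.cons false s)) - α * Qf a' (fun s => w (Fin.cons true s)) := by
      intro w
      rw [Qf_split, ← ha', ← hα]
    -- split x
    obtain ⟨x₀, hx₀⟩ : ∃ f, (fun s => x (Fin.cons false s)) = f := ⟨_, rfl⟩
    obtain ⟨x₁, hx₁⟩ : ∃ f, (fun s => x (Fin.cons true s)) = f := ⟨_, rfl⟩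
    have hc' : Qf a' x₀ - α * Qf a' x₁ = c := by
      rw [← hx₀, ← hx₁, ← hsplit x, hx]
    -- at least one of the two halves is a unit
    have huv : IsUnit (Qf a' x₀) ∨ IsUnit (Qf a' x₁) := by
      by_contra hcon
      push_neg at hcon
      obtain ⟨h₀, h₁⟩ := hcon
      have m₀ : Qf a' x₀ ∈ IsLocalRing.maximalIdeal R :=
        (IsLocalRing.mem_maximalIdeal _).mpr h₀
      have m₁ : Qf a' x₁ ∈ IsLocalRing.maximalIdeal R :=
        (IsLocalRing.mem_maximalIdeal _).mpr h₁
      have hcm : c ∈ IsLocalRing.maximalIdeal R := by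
        rw [← hc']
        exact Submodule.sub_mem _ m₀ (Ideal.mul_mem_left _ α m₁)
      exact ((IsLocalRing.mem_maximalIdeal c).mp hcm) hc
    obtain ⟨t, hE, hU, hV⟩ := exists_transversal hinf α (Qf a' x₀) (Qf a' x₁)
      (pol a' x₀ x₁) (pol a' x₁ x₀) hαu huv
    -- the transversal vectors
    obtain ⟨X₀, hX₀⟩ : ∃ f, (fun s => x₀ s + (α * t) * x₁ s) = f := ⟨_, rfl⟩
    obtain ⟨X₁, hX₁⟩ : ∃ f, (fun s => x₁ s + t * x₀ s) = f := ⟨_, rfl⟩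
    have hQX₀ : Qf a' X₀ = Qf a' x₀ + (α * t) * pol a' x₀ x₁ + (α * t) ^ 2 * Qf a' x₁ := by
      rw [← hX₀]; exact Qf_expand a' x₀ x₁ (α * t)
    have hQX₁ : Qf a' X₁ = Qf a' x₁ + t * pol a' x₁ x₀ + t ^ 2 * Qf a' x₀ := by
      rw [← hX₁]; exact Qf_expand a' x₁ x₀ t
    have hUu : IsUnit (Qf a' X₀) := by rw [hQX₀]; exact hU
    have hVu : IsUnit (Qf a' X₁) := by rw [hQX₁]; exact hV
    -- key identity
    have hkey : Qf a' X₀ - α * Qf a' X₁ = (1 - α * t ^ 2) * c := by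
      rw [hQX₀, hQX₁, pol_comm a' x₁ x₀]
      linear_combination (1 - α * t ^ 2) * hc'
    -- inverses
    obtain ⟨uI, hui, huiu⟩ : ∃ w : R, Qf a' X₀ * w = 1 ∧ IsUnit w :=
      ⟨↑hUu.unit⁻¹, hUu.mul_val_inv, (hUu.unit⁻¹).isUnit⟩
    obtain ⟨vI, hvi, hviu⟩ : ∃ w : R, Qf a' X₁ * w = 1 ∧ IsUnit w :=
      ⟨↑hVu.unit⁻¹, hVu.mul_val_inv, (hVu.unit⁻¹).isUnit⟩
    obtain ⟨eI, hei, heiu⟩ : ∃ w : R, (1 - α * t ^ 2) * w = 1 ∧ IsUnit w :=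
      ⟨↑hE.unit⁻¹, hE.mul_val_inv, (hE.unit⁻¹).isUnit⟩
    -- representations of the inverses
    have hrepui : ∃ f, Qf a' f = uI := by
      refine ⟨fun s => uI * X₀ s, ?_⟩
      rw [Qf_smul a' uI X₀]
      linear_combination uI * hui
    have hrepvi : ∃ f, Qf a' f = vI := by
      refine ⟨fun s => vI * X₁ s, ?_⟩
      rw [Qf_smul a' vI X₁]
      linear_combination vI * hvi
    -- induction hypotheses, specialized
    have IHu := IH a' (Qf a' X₀) hUu ⟨X₀, rfl⟩
    have IHv := IH a' (Qf a' X₁) hVu ⟨X₁, rfl⟩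
    have IHui := IH a' uI huiu hrepui
    have IHvi := IH a' vI hviu hrepvi
    -- split z
    obtain ⟨z₀, hz₀⟩ : ∃ f, (fun s => z (Fin.cons false s)) = f := ⟨_, rfl⟩
    obtain ⟨z₁, hz₁⟩ : ∃ f, (fun s => z (Fin.cons true s)) = f := ⟨_, rfl⟩
    have hz : Qf a z = Qf a' z₀ - α * Qf a' z₁ := by
      rw [← hz₀, ← hz₁]; exact hsplit z
    -- build the new vector
    obtain ⟨Z₁a, hZ₁a⟩ := IHvi z₁
    obtain ⟨Z₁, hZ₁⟩ := IHu Z₁a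
    obtain ⟨W₀, hW₀⟩ : ∃ f, (fun s => z₀ s + (α * Qf a' X₁ * uI) * Z₁ s) = f := ⟨_, rfl⟩
    obtain ⟨W₁, hW₁⟩ : ∃ f, (fun s => z₀ s + 1 * Z₁ s) = f := ⟨_, rfl⟩
    have hQW₀ : Qf a' W₀ = Qf a' z₀ + (α * Qf a' X₁ * uI) * pol a' z₀ Z₁
        + (α * Qf a' X₁ * uI) ^ 2 * Qf a' Z₁ := by
      rw [← hW₀]; exact Qf_expand a' z₀ Z₁ _
    have hQW₁ : Qf a' W₁ = Qf a' z₀ + 1 * pol a' z₀ Z₁ + 1 ^ 2 * Qf a' Z₁ := by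
      rw [← hW₁]; exact Qf_expand a' z₀ Z₁ 1
    obtain ⟨Y₁a, hY₁a⟩ := IHui W₁
    obtain ⟨Y₁, hY₁⟩ := IHv Y₁a
    obtain ⟨P₀, hP₀⟩ := IHu W₀
    obtain ⟨P₁, hP₁⟩ := IHu Y₁
    -- intermediate identities
    have h5 : (α * Qf a' X₁ * uI) * Qf a' Z₁ = α * Qf a' z₁ := by
      rw [hZ₁, hZ₁a]
      linear_combination (α * Qf a' X₁ * vI * Qf a' z₁) * hui + (α * Qf a' z₁) * hvi
    have h6 : Qf a' W₀ - (α * Qf a' X₁ * uI) * Qf a' W₁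
        = (1 - α * Qf a' X₁ * uI) * (Qf a' z₀ - α * Qf a' z₁) := by
      rw [hQW₀, hQW₁]
      linear_combination ((α * Qf a' X₁ * uI) - 1) * h5
    have h7 : Qf a' P₀ - α * Qf a' P₁
        = Qf a' X₀ * (1 - α * Qf a' X₁ * uI) * (Qf a' z₀ - α * Qf a' z₁) := by
      rw [hP₀, hP₁, hY₁, hY₁a]
      linear_combination (Qf a' X₀) * h6
    -- the result vector
    refine ⟨glue (fun s => eI * (P₀ s + (-(α * t)) * P₁ s))
      (fun s => eI * (P₁ s + (-t) * P₀ s)), ?_⟩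
    have hglue : Qf a (glue (fun s => eI * (P₀ s + (-(α * t)) * P₁ s))
        (fun s => eI * (P₁ s + (-t) * P₀ s)))
        = Qf a' (fun s => eI * (P₀ s + (-(α * t)) * P₁ s))
          - α * Qf a' (fun s => eI * (P₁ s + (-t) * P₀ s)) := by
      rw [Qf_glue, ← ha', ← hα]
    rw [hglue, Qf_scale_expand a' P₀ P₁ eI (-(α * t)), Qf_scale_expand a' P₁ P₀ eI (-t),
      pol_comm a' P₁ P₀, hz]
    linear_combination (eI ^ 2 * (1 - α * t ^ 2)) * h7
      - (eI ^ 2 * (1 - α * t ^ 2) * α * Qf a' X₁ * (Qf a' z₀ - α * Qf a' z₁)) * hui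
      + (eI ^ 2 * (1 - α * t ^ 2) * (Qf a' z₀ - α * Qf a' z₁)) * hkey
      + (c * (Qf a' z₀ - α * Qf a' z₁) * ((1 - α * t ^ 2) * eI + 1)) * hei


lemma pfister_eq_Qf {m : ℕ} (a : Fin m → Rˣ) (x : (Fin m → Bool) → R) :
    _root_.pfisterForm R a x = Qf a x := by
  unfold _root_.pfisterForm Qf pw
  rw [QuadraticMap.weightedSumSquares_apply]
  exact Finset.sum_congr rfl fun s _ => by rw [smul_eq_mul]

end PfisterAux

open PfisterAux in
/-- Let `R` be a regular local ring of mixed characteristic `(0, p)`, `p ≠ 2` prime, such that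
`R/pR` is regular and the residue field of `R` is infinite, and let `Q` be a non-degenerate
`m`-fold Pfister form over `R`.  Then the set `S_Q` of units of `R` represented by `Q` is a
multiplicative subgroup of `Rˣ`: it contains `1`, and is closed under multiplication and under
taking inverses. -/
theorem pfister_represented_units_form_subgroup
    {R : Type*} [CommRing R] [IsLocalRing R] (hreg : IsRegularLocal R)
    {p : ℕ} (hp : p.Prime) (hp2 : p ≠ 2)
    [CharZero R] (hresp : CharP (IsLocalRing.ResidueField R) p)
    (hquot : IsRegularLocal (R ⧸ Ideal.span ({(p : R)} : Set R)))
    (hinf : Infinite (IsLocalRing.ResidueField R))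
    {m : ℕ} (a : Fin m → Rˣ)
    (hQ : Function.Bijective ⇑(QuadraticMap.polarBilin (pfisterForm R a))) :
    (∃ x : (Fin m → Bool) → R, pfisterForm R a x = ((1 : Rˣ) : R)) ∧
    (∀ c₁ c₂ : Rˣ, (∃ x : (Fin m → Bool) → R, pfisterForm R a x = (c₁ : R)) →
      (∃ x : (Fin m → Bool) → R, pfisterForm R a x = (c₂ : R)) →
      (∃ x : (Fin m → Bool) → R, pfisterForm R a x = ((c₁ * c₂ : Rˣ) : R))) ∧
    (∀ c : Rˣ, (∃ x : (Fin m → Bool) → R, pfisterForm R a x = (c : R)) →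
      (∃ x : (Fin m → Bool) → R, pfisterForm R a x = ((c⁻¹ : Rˣ) : R))) := by
  refine ⟨?_, ?_, ?_⟩
  · -- 1 is represented
    refine ⟨fun s => if s = (fun _ => false) then 1 else 0, ?_⟩
    rw [pfister_eq_Qf]
    unfold Qf
    rw [Finset.sum_eq_single (fun _ => false : Fin m → Bool)]
    · simp [pw]
    · intro b _ hb
      simp [hb]
    · intro h
      exact absurd (Finset.mem_univ _) h
  · -- closed under multiplication
    intro c₁ c₂ h₁ h₂
    obtain ⟨x₁, hx₁⟩ := h₁
    obtain ⟨x₂, hx₂⟩ := h₂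
    rw [pfister_eq_Qf] at hx₁ hx₂
    obtain ⟨y, hy⟩ := Qf_mul hinf m a (c₁ : R) c₁.isUnit ⟨x₁, hx₁⟩ x₂
    refine ⟨y, ?_⟩
    rw [pfister_eq_Qf, hy, hx₂, Units.val_mul]
  · -- closed under inverses
    intro c hc
    obtain ⟨x, hx⟩ := hc
    rw [pfister_eq_Qf] at hx
    refine ⟨fun s => ((c⁻¹ : Rˣ) : R) * x s, ?_⟩
    rw [pfister_eq_Qf, Qf_smul, hx]
    have h1 : (c : R) * ((c⁻¹ : Rˣ) : R) = 1 := by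
      rw [← Units.val_mul, mul_inv_cancel, Units.val_one]
    linear_combination ((c⁻¹ : Rˣ) : R) * h1
end

section
/- Let k be an algebraically closed field of characteristic different from 2, let V be a 2n-dimensional k-vector space equipped with a hyperbolic quadratic form Q, and let P ⊂ V be an (n+1)-dimensional subspace such that the restriction Q|_P is non-degenerate. Then there exists a totally isotropic n-dimensional subspace W ⊂ V such that dim(P ∩ W) = 1. -/
/-!
Over an algebraically closed field of characteristic `≠ 2` any two nondegenerate quadratic spaces
of the same dimension are isometric. As `Q` has an `n`-dimensional totally isotropic subspace and
`dim P = n + 1`, `P` contains an isotropic `v ≠ 0`. Completing `v` to a hyperbolic plane `H ⊆ P`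
splits `P = H ⊥ U` with `U` nondegenerate of dimension `n - 1`, the dimension of the nondegenerate
space `Pᗮ`. For an isometry `f : U → Pᗮ` from `Q` to `-Q`, the space `k v ⊕ {x + f x | x ∈ U}` is
totally isotropic of dimension `n`, and it meets `P` exactly in `k v` because `P ∩ Pᗮ = 0`.
-/

/-- The hyperbolic plane quadratic form over `R`: `(x, y) ↦ x * y`. -/
noncomputable def hypPlane (R : Type*) [CommRing R] : QuadraticForm R (R × R) :=
  LinearMap.BilinMap.toQuadraticMap
    (LinearMap.mk₂ R (fun p q => p.1 * q.2)
      (fun p p' q => by simp [add_mul])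
      (fun c p q => by simp [mul_assoc])
      (fun p q q' => by simp [mul_add])
      (fun c p q => by simp [mul_left_comm, mul_assoc]))

/-- The orthogonal direct sum of `n` copies of the hyperbolic plane over `R`. -/
noncomputable def hypSum (R : Type*) [CommRing R] (n : ℕ) :
    QuadraticForm R (Fin n → R × R) :=
  QuadraticMap.pi fun _ => hypPlane R

open Module QuadraticMap
open LinearMap (BilinForm)

lemma isSymm_polarBilin {R M : Type*} [CommRing R] [AddCommGroup M] [Module R M]
    (Q : QuadraticForm R M) : BilinForm.IsSymm (polarBilin Q) :=
  ⟨polar_comm Q⟩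

section Equivalence

variable {K M₁ M₂ : Type*} [Field K] [AddCommGroup M₁] [Module K M₁] [AddCommGroup M₂] [Module K M₂]

lemma QuadraticMap.IsometryEquiv.nondegenerate_polarBilin_iff {Q₁ : QuadraticForm K M₁}
    {Q₂ : QuadraticForm K M₂} (e : Q₁.IsometryEquiv Q₂) :
    BilinForm.Nondegenerate (polarBilin Q₁) ↔ BilinForm.Nondegenerate (polarBilin Q₂) := by
  have : polarBilin Q₂ = BilinForm.congr e.toLinearEquiv (polarBilin Q₁) := by
    ext x y
    simp only [BilinForm.congr_apply, polarBilin_apply_apply, polar, ← map_add]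
    exact congr($(e.symm.map_app (x + y)) - $(e.symm.map_app x) - $(e.symm.map_app y)).symm
  rw [this, BilinForm.nondegenerate_congr_iff]

lemma separatingLeft_associated_of_nondegenerate [Invertible (2 : K)] {Q : QuadraticForm K M₁}
    (hQ : BilinForm.Nondegenerate (polarBilin Q)) : (associated Q).SeparatingLeft := fun x hx =>
  hQ.1 x fun y => by
    rw [← two_nsmul_associated K Q, LinearMap.smul_apply, LinearMap.smul_apply]
    exact (congrArg _ (hx y)).trans (smul_zero _)

lemma nondegenerate_polarBilin_neg {Q : QuadraticForm K M₁}
    (hQ : BilinForm.Nondegenerate (polarBilin Q)) : BilinForm.Nondegenerate (polarBilin (-Q)) := by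
  refine ((isSymm_polarBilin (-Q)).isRefl.nondegenerate_iff_separatingLeft).mpr fun x hx => ?_
  exact hQ.1 x fun y => by
    have := hx y
    simp only [polarBilin_apply_apply, polar, neg_apply] at this ⊢
    linear_combination -this

theorem QuadraticForm.equivalent_of_finrank_eq_of_isAlgClosed [IsAlgClosed K] [Invertible (2 : K)]
    [FiniteDimensional K M₁] [FiniteDimensional K M₂] {Q₁ : QuadraticForm K M₁}
    {Q₂ : QuadraticForm K M₂} (h₁ : BilinForm.Nondegenerate (polarBilin Q₁))
    (h₂ : BilinForm.Nondegenerate (polarBilin Q₂)) (h : finrank K M₁ = finrank K M₂) :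
    Equivalent Q₁ Q₂ := by
  obtain ⟨e₁⟩ := Q₁.equivalent_weightedSumSquares_of_isAlgClosed
    (separatingLeft_associated_of_nondegenerate h₁)
  obtain ⟨e₂⟩ := Q₂.equivalent_weightedSumSquares_of_isAlgClosed
    (separatingLeft_associated_of_nondegenerate h₂)
  rw [h] at e₁
  exact ⟨e₁.trans e₂.symm⟩

end Equivalence

section Hyperbolic

variable {K : Type*} [Field K] {n : ℕ}

lemma hypSum_apply (f : Fin n → K × K) : hypSum K n f = ∑ i, (f i).1 * (f i).2 := by
  simp [hypSum, hypPlane]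

lemma polar_hypSum (f g : Fin n → K × K) :
    polar (hypSum K n) f g = ∑ i, ((f i).1 * (g i).2 + (g i).1 * (f i).2) := by
  simp only [polar, hypSum_apply, ← Finset.sum_sub_distrib]
  refine Finset.sum_congr rfl fun i _ => ?_
  simp only [Pi.add_apply, Prod.fst_add, Prod.snd_add]
  ring

lemma nondegenerate_polarBilin_hypSum : BilinForm.Nondegenerate (polarBilin (hypSum K n)) := by
  refine (isSymm_polarBilin (hypSum K n)).isRefl.nondegenerate_iff_separatingLeft.mpr
    fun f hf => ?_
  funext i
  have h₁ := hf (Pi.single i (0, 1))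
  have h₂ := hf (Pi.single i (1, 0))
  simp only [polarBilin_apply_apply, polar_hypSum] at h₁ h₂
  rw [Finset.sum_eq_single i (fun j _ hj => by simp [Pi.single_eq_of_ne hj]) (by simp)] at h₁ h₂
  simp only [Pi.single_eq_same] at h₁ h₂
  exact Prod.ext (by simpa using h₁) (by simpa using h₂)

lemma exists_isotropic_finrank_eq_hypSum :
    ∃ L : Submodule K (Fin n → K × K), finrank K L = n ∧ ∀ x ∈ L, hypSum K n x = 0 := by
  let φ : (Fin n → K) →ₗ[K] (Fin n → K × K) :=
    LinearMap.pi fun i => LinearMap.inl K K K ∘ₗ LinearMap.proj i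
  have hφ : Function.Injective φ := fun a b hab =>
    funext fun i => congrArg Prod.fst (congrFun hab i)
  refine ⟨LinearMap.range φ, by rw [LinearMap.finrank_range_of_inj hφ, finrank_fin_fun], ?_⟩
  rintro _ ⟨a, rfl⟩
  simp [φ, hypSum_apply]

end Hyperbolic

section Orthogonal

variable {K V : Type*} [Field K] [AddCommGroup V] [Module K V] [FiniteDimensional K V]
  {B : BilinForm K V} {H P : Submodule K V}

lemma sup_inf_orthogonal_of_le (hB : B.IsRefl) (hHP : H ≤ P)
    (hH : (B.restrict H).Nondegenerate) : H ⊔ (P ⊓ B.orthogonal H) = P := by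
  rw [inf_comm, ← sup_inf_assoc_of_le _ hHP,
    (BilinForm.isCompl_orthogonal_of_restrict_nondegenerate hB hH).sup_eq_top, top_inf_eq]

lemma finrank_inf_orthogonal_add_finrank (hB : B.IsRefl) (hHP : H ≤ P)
    (hH : (B.restrict H).Nondegenerate) :
    finrank K ↥(P ⊓ B.orthogonal H) + finrank K H = finrank K P := by
  have hdisj : H ⊓ (P ⊓ B.orthogonal H) = ⊥ :=
    ((BilinForm.isCompl_orthogonal_of_restrict_nondegenerate hB hH).disjoint.mono_right
      inf_le_right).eq_bot
  have h := Submodule.finrank_sup_add_finrank_inf_eq H (P ⊓ B.orthogonal H)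
  rw [sup_inf_orthogonal_of_le hB hHP hH, hdisj, finrank_bot] at h
  omega

lemma nondegenerate_restrict_inf_orthogonal (hB : B.IsRefl) (hHP : H ≤ P)
    (hH : (B.restrict H).Nondegenerate) (hP : (B.restrict P).Nondegenerate) :
    (B.restrict (P ⊓ B.orthogonal H)).Nondegenerate := by
  refine B.nondegenerate_restrict_of_disjoint_orthogonal hB (Submodule.disjoint_def.mpr ?_)
  intro x hxU hxU'
  have hxP : x ∈ B.orthogonal P := by
    rw [← sup_inf_orthogonal_of_le hB hHP hH]
    intro p hp
    obtain ⟨h, hh, u, hu, rfl⟩ := Submodule.mem_sup.mp hp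
    simp only [map_add, LinearMap.add_apply, hxU.2 h hh, hxU' u hu, add_zero]
  exact Submodule.disjoint_def.mp
    (BilinForm.isCompl_orthogonal_of_restrict_nondegenerate hB hP).disjoint x hxU.1 hxP

lemma nondegenerate_restrict_orthogonal (hB : B.Nondegenerate) (hB' : B.IsRefl)
    (hP : (B.restrict P).Nondegenerate) : (B.restrict (B.orthogonal P)).Nondegenerate := by
  rw [BilinForm.restrict_nondegenerate_iff_isCompl_orthogonal hB',
    BilinForm.orthogonal_orthogonal hB hB']
  exact (BilinForm.isCompl_orthogonal_of_restrict_nondegenerate hB' hP).symm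

end Orthogonal

section HyperbolicPair

variable {K V : Type*} [Field K] [AddCommGroup V] [Module K V] {Q : QuadraticForm K V}
  {v w : V}

lemma exists_isotropic_polar_ne_zero {P : Submodule K V}
    (hP : (BilinForm.restrict (polarBilin Q) P).Nondegenerate) (hvP : v ∈ P) (hv : v ≠ 0)
    (hQv : Q v = 0) : ∃ w ∈ P, Q w = 0 ∧ polar Q v w ≠ 0 := by
  obtain ⟨u, huP, hvu⟩ : ∃ u ∈ P, polar Q v u ≠ 0 := by
    by_contra! h
    exact hv (congrArg Subtype.val (hP.1 ⟨v, hvP⟩ fun u => h u u.2))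
  -- `Q (u + c • v) = Q u + c * polar Q v u` since `Q v = 0`; solve for `c`
  refine ⟨u - (Q u / polar Q v u) • v, P.sub_mem huP (P.smul_mem _ hvP), ?_, ?_⟩
  · rw [sub_eq_add_neg, ← neg_smul, QuadraticMap.map_add Q, QuadraticMap.map_smul, hQv,
      polar_smul_right, polar_comm Q u v, smul_zero, add_zero, smul_eq_mul, neg_mul,
      div_mul_cancel₀ _ hvu, add_neg_cancel]
  · rw [polar_sub_right, polar_smul_right, polar_self, hQv]
    simpa using hvu

lemma eq_zero_of_polar_smul_add_smul (hv : Q v = 0) (hw : Q w = 0) (hvw : polar Q v w ≠ 0)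
    {a b : K} (h₁ : polar Q (a • v + b • w) v = 0) (h₂ : polar Q (a • v + b • w) w = 0) :
    a = 0 ∧ b = 0 := by
  simp only [polar_add_left, polar_smul_left, polar_self, hv, hw, smul_zero, smul_eq_mul,
    mul_zero, zero_add, add_zero] at h₁ h₂
  rw [polar_comm] at h₁
  exact ⟨(mul_eq_zero.mp h₂).resolve_right hvw, (mul_eq_zero.mp h₁).resolve_right hvw⟩

lemma finrank_span_pair_eq_two (hv : Q v = 0) (hw : Q w = 0) (hvw : polar Q v w ≠ 0) :
    finrank K (Submodule.span K {v, w}) = 2 := by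
  have hli : LinearIndependent K ![v, w] := LinearIndependent.pair_iff.mpr fun a b hab =>
    eq_zero_of_polar_smul_add_smul hv hw hvw (by simp [hab]) (by simp [hab])
  have h := finrank_span_eq_card hli
  rwa [Matrix.range_cons_cons_empty, Fintype.card_fin] at h

lemma nondegenerate_restrict_span_pair (hv : Q v = 0) (hw : Q w = 0) (hvw : polar Q v w ≠ 0) :
    (BilinForm.restrict (polarBilin Q) (Submodule.span K {v, w})).Nondegenerate := by
  refine ((isSymm_polarBilin Q).restrict _).isRefl.nondegenerate_iff_separatingLeft.mpr ?_
  rintro ⟨x, hx⟩ hx'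
  obtain ⟨a, b, rfl⟩ := Submodule.mem_span_pair.mp hx
  obtain ⟨rfl, rfl⟩ := eq_zero_of_polar_smul_add_smul hv hw hvw
    (hx' ⟨v, Submodule.subset_span (by simp)⟩) (hx' ⟨w, Submodule.subset_span (by simp)⟩)
  simp

end HyperbolicPair

section Graph

variable {K V : Type*} [Field K] [AddCommGroup V] [Module K V] {U : Submodule K V}

def lineAddGraph (v : V) (f : U →ₗ[K] V) : K × U →ₗ[K] V :=
  (LinearMap.fst K K U).smulRight v + (U.subtype + f) ∘ₗ LinearMap.snd K K U

@[simp]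
lemma lineAddGraph_apply (v : V) (f : U →ₗ[K] V) (a : K) (x : U) :
    lineAddGraph v f (a, x) = a • v + (x + f x) := rfl

variable {P P' : Submodule K V} {v : V} {f : U →ₗ[K] V}

lemma eq_zero_of_lineAddGraph_mem (hP : Disjoint P P') (hUP : U ≤ P) (hvP : v ∈ P)
    (hfP : ∀ x, f x ∈ P') (hf : Function.Injective f) {a : K} {x : U}
    (h : lineAddGraph v f (a, x) ∈ P) : x = 0 := by
  have hfx : f x ∈ P := by
    have : f x = lineAddGraph v f (a, x) - a • v - x := by simp
    rw [this]
    exact P.sub_mem (P.sub_mem h (P.smul_mem a hvP)) (hUP x.2)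
  exact hf (by rw [Submodule.disjoint_def.mp hP _ hfx (hfP x), map_zero])

lemma lineAddGraph_injective (hP : Disjoint P P') (hUP : U ≤ P) (hvP : v ∈ P) (hv : v ≠ 0)
    (hfP : ∀ x, f x ∈ P') (hf : Function.Injective f) : Function.Injective (lineAddGraph v f) := by
  refine (injective_iff_map_eq_zero _).mpr fun ⟨a, x⟩ h => ?_
  obtain rfl := eq_zero_of_lineAddGraph_mem hP hUP hvP hfP hf (h ▸ P.zero_mem)
  simpa [hv] using h

lemma inf_range_lineAddGraph (hP : Disjoint P P') (hUP : U ≤ P) (hvP : v ∈ P)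
    (hfP : ∀ x, f x ∈ P') (hf : Function.Injective f) :
    P ⊓ LinearMap.range (lineAddGraph v f) = K ∙ v := by
  apply le_antisymm
  · rintro _ ⟨hP', ⟨a, x⟩, rfl⟩
    obtain rfl := eq_zero_of_lineAddGraph_mem hP hUP hvP hfP hf hP'
    simpa using Submodule.smul_mem _ a (Submodule.mem_span_singleton_self v)
  · rw [Submodule.span_singleton_le_iff_mem]
    exact ⟨hvP, (1, 0), by simp⟩

lemma map_lineAddGraph_eq_zero {Q : QuadraticForm K V} (hUP : U ≤ P) (hvP : v ∈ P)
    (hfP : ∀ x, f x ∈ BilinForm.orthogonal (polarBilin Q) P) (hQv : Q v = 0)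
    (hvU : ∀ u ∈ U, polar Q v u = 0) (hQf : ∀ x, Q (f x) = -Q x) (p : K × U) :
    Q (lineAddGraph v f p) = 0 := by
  obtain ⟨a, x⟩ := p
  have hvf : polar Q v (f x) = 0 := hfP x v hvP
  have hxf : polar Q x (f x) = 0 := hfP x x (hUP x.2)
  rw [lineAddGraph_apply, QuadraticMap.map_add Q, QuadraticMap.map_add Q, polar_smul_left,
    polar_add_right, QuadraticMap.map_smul, hQv, hQf, hvU x x.2, hvf, hxf]
  simp

end Graph

section Isotropic

variable {K V : Type*} [Field K] [AddCommGroup V] [Module K V] {Q : QuadraticForm K V}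

lemma exists_isotropic_finrank_eq_of_equivalent_hypSum {n : ℕ} (hQ : Equivalent Q (hypSum K n)) :
    ∃ L : Submodule K V, finrank K L = n ∧ ∀ x ∈ L, Q x = 0 := by
  obtain ⟨e⟩ := hQ
  obtain ⟨L, hL, hLQ⟩ := exists_isotropic_finrank_eq_hypSum (K := K) (n := n)
  refine ⟨L.map (e.symm.toLinearEquiv : _ →ₗ[K] V), by rw [LinearEquiv.finrank_map_eq, hL], ?_⟩
  rintro _ ⟨x, hx, rfl⟩
  exact (e.symm.map_app x).trans (hLQ x hx)

lemma exists_isotropic_mem_of_finrank_lt [FiniteDimensional K V] {L P : Submodule K V}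
    (hL : ∀ x ∈ L, Q x = 0) (hLP : finrank K V < finrank K P + finrank K L) :
    ∃ v ∈ P, v ≠ 0 ∧ Q v = 0 := by
  have hPL : ¬Disjoint P L := fun h => hLP.not_ge (Submodule.finrank_add_finrank_le_of_disjoint h)
  obtain ⟨v, hvP, hvL, hv⟩ : ∃ v ∈ P, v ∈ L ∧ v ≠ 0 := by
    simpa [Submodule.disjoint_def] using hPL
  exact ⟨v, hvP, hv, hL v hvL⟩

end Isotropic

section Construction

variable {K V : Type*} [Field K] [AddCommGroup V] [Module K V] [FiniteDimensional K V]
  {Q : QuadraticForm K V}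

lemma exists_nondegenerate_le_orthogonal_of_isotropic {P : Submodule K V}
    (hP : (BilinForm.restrict (polarBilin Q) P).Nondegenerate) {v : V} (hvP : v ∈ P)
    (hv : v ≠ 0) (hQv : Q v = 0) :
    ∃ U ≤ P, (∀ u ∈ U, polar Q v u = 0) ∧
      (BilinForm.restrict (polarBilin Q) U).Nondegenerate ∧ finrank K U + 2 = finrank K P := by
  obtain ⟨w, hwP, hQw, hvw⟩ := exists_isotropic_polar_ne_zero hP hvP hv hQv
  have hvH : v ∈ Submodule.span K {v, w} := Submodule.subset_span (by simp)
  have hHP : Submodule.span K {v, w} ≤ P := by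
    rw [Submodule.span_le, Set.insert_subset_iff, Set.singleton_subset_iff]
    exact ⟨hvP, hwP⟩
  have hH := nondegenerate_restrict_span_pair hQv hQw hvw
  have hB := (isSymm_polarBilin Q).isRefl
  refine ⟨P ⊓ BilinForm.orthogonal (polarBilin Q) (Submodule.span K {v, w}), inf_le_left,
    fun u hu => hu.2 v hvH, nondegenerate_restrict_inf_orthogonal hB hHP hH hP, ?_⟩
  rw [← finrank_span_pair_eq_two hQv hQw hvw]
  exact finrank_inf_orthogonal_add_finrank hB hHP hH

theorem exists_isotropic_inf_eq_span_of_isAlgClosed [IsAlgClosed K] [Invertible (2 : K)]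
    (hQ : BilinForm.Nondegenerate (polarBilin Q)) {P : Submodule K V}
    (hP : (BilinForm.restrict (polarBilin Q) P).Nondegenerate)
    (hPV : finrank K V + 2 = 2 * finrank K P) {v : V} (hvP : v ∈ P) (hv : v ≠ 0) (hQv : Q v = 0) :
    ∃ W : Submodule K V, finrank K W + 1 = finrank K P ∧ (∀ w ∈ W, Q w = 0) ∧ P ⊓ W = K ∙ v := by
  obtain ⟨U, hUP, hvU, hU, hU_rank⟩ :=
    exists_nondegenerate_le_orthogonal_of_isotropic hP hvP hv hQv
  have hB := (isSymm_polarBilin Q).isRefl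
  set P' := BilinForm.orthogonal (polarBilin Q) P
  have hP' : finrank K P' = finrank K V - finrank K P := BilinForm.finrank_orthogonal hQ P
  obtain ⟨f⟩ : Equivalent (Q.comp U.subtype) (-(Q.comp P'.subtype)) :=
    QuadraticForm.equivalent_of_finrank_eq_of_isAlgClosed hU
      (nondegenerate_polarBilin_neg (nondegenerate_restrict_orthogonal hQ hB hP)) (by omega)
  have hPP' := (BilinForm.isCompl_orthogonal_of_restrict_nondegenerate hB hP).disjoint
  let g : U →ₗ[K] V := P'.subtype ∘ₗ f.toLinearEquiv.toLinearMap
  have hgP' (x : U) : g x ∈ P' := (f x).2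
  have hg : Function.Injective g := P'.injective_subtype.comp f.injective
  have hQg (x : U) : Q (g x) = -Q x := neg_eq_iff_eq_neg.mp (f.map_app x)
  refine ⟨LinearMap.range (lineAddGraph v g), ?_, ?_, inf_range_lineAddGraph hPP' hUP hvP hgP' hg⟩
  · rw [LinearMap.finrank_range_of_inj (lineAddGraph_injective hPP' hUP hvP hv hgP' hg),
      finrank_prod, finrank_self]
    omega
  · rintro _ ⟨p, rfl⟩
    exact map_lineAddGraph_eq_zero hUP hvP hgP' hQv hvU hQg p

end Construction

/-- Let `k` be an algebraically closed field of characteristic `≠ 2`, `V` a `2n`-dimensional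
`k`-vector space with a hyperbolic quadratic form `Q` (i.e. `Q` is isometric to the orthogonal
sum of `n` hyperbolic planes), and `P ⊂ V` an `(n+1)`-dimensional subspace such that `Q|_P` is
non-degenerate.  Then there is a totally isotropic `n`-dimensional subspace `W ⊂ V` with
`dim (P ⊓ W) = 1`. -/
theorem exists_totallyIsotropic_meet_dim_one_of_isAlgClosed
    {k V : Type*} [Field k] [IsAlgClosed k] (hchar : ringChar k ≠ 2)
    [AddCommGroup V] [Module k V] [FiniteDimensional k V]
    {n : ℕ} (hdim : Module.finrank k V = 2 * n)
    (Q : QuadraticForm k V) (hQ : QuadraticMap.Equivalent Q (hypSum k n))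
    (P : Submodule k V) (hP : Module.finrank k P = n + 1)
    (hPnd : LinearMap.BilinForm.Nondegenerate
      (QuadraticMap.polarBilin (Q.comp P.subtype))) :
    ∃ W : Submodule k V, Module.finrank k W = n ∧ (∀ w ∈ W, Q w = 0) ∧
      Module.finrank k ↥(P ⊓ W) = 1 := by
  have : Invertible (2 : k) := invertibleOfNonzero (Ring.two_ne_zero hchar)
  have hQnd : BilinForm.Nondegenerate (polarBilin Q) :=
    hQ.some.nondegenerate_polarBilin_iff.mpr nondegenerate_polarBilin_hypSum
  obtain ⟨L, hL, hLQ⟩ := exists_isotropic_finrank_eq_of_equivalent_hypSum hQ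
  obtain ⟨v, hvP, hv, hQv⟩ := exists_isotropic_mem_of_finrank_lt (P := P) hLQ (by omega)
  obtain ⟨W, hW, hWQ, hPW⟩ :=
    exists_isotropic_inf_eq_span_of_isAlgClosed hQnd hPnd (by omega) hvP hv hQv
  exact ⟨W, by omega, hWQ, by rw [hPW, finrank_span_singleton hv]⟩
end

section
/- Let R be a local ring with maximal ideal 𝔪 and residue field k = R/𝔪 of characteristic different from 2, and let M be a free R-module of finite rank equipped with a non-degenerate quadratic form Q. Then the natural group homomorphism O_R(M) → O_k(M̄) from the orthogonal group of (M,Q) over R to the orthogonal group of the reduced form (M̄, Q̄) over k, induced by reduction modulo 𝔪, is surjective. -/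
open Submodule IsLocalRing
open scoped Ring

/-!
Over the residue field `k`, the Cartan–Dieudonné theorem writes `g` as a product of reflections
`s_{v̄₁} ⋯ s_{v̄ₙ}`: one or two reflections carry `g v` back to an anisotropic vector `v`, after
which `g` restricts to an isometry of `v^⊥`, of smaller dimension. For lifts `vᵢ ∈ M` of the `v̄ᵢ`
the values `Q vᵢ` are units, so the reflections `s_{vᵢ}` of `M` are isometries reducing to the
`s_{v̄ᵢ}`, and `s_{v₁} ⋯ s_{vₙ}` lifts `g`. The reduced form is non-degenerate because a linear form
on a free module with values in `𝔪` lies in `𝔪 • M^∨`.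
-/

lemma map_ringInverse {R S F : Type*} [MonoidWithZero R] [MonoidWithZero S] [FunLike F R S]
    [MonoidWithZeroHomClass F R S] (f : F) [IsLocalHom f] (a : R) : f a⁻¹ʳ = (f a)⁻¹ʳ := by
  by_cases ha : IsUnit a
  · calc f a⁻¹ʳ = (f a)⁻¹ʳ * (f a * f a⁻¹ʳ) :=
          (Ring.inverse_mul_cancel_left _ _ (ha.map f)).symm
      _ = (f a)⁻¹ʳ := by rw [← map_mul, Ring.mul_inverse_cancel _ ha, map_one, mul_one]
  · rw [Ring.inverse_non_unit a ha, Ring.inverse_non_unit _ (mt (isUnit_of_map_unit f a) ha),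
      map_zero]

namespace QuadraticMap

variable {R M : Type*} [CommRing R] [AddCommGroup M] [Module R M] (Q : QuadraticForm R M)

lemma apply_sub (x y : M) : Q (x - y) = Q x + Q y - polar Q x y := by
  rw [sub_eq_add_neg, QuadraticMap.map_add Q, QuadraticMap.map_neg, polar_neg_right,
    sub_eq_add_neg]

lemma involutive_preReflection_polar (v : M) :
    Function.Involutive (Module.preReflection v ((Q v)⁻¹ʳ • polarBilin Q v)) := by
  by_cases hv : IsUnit (Q v)
  · refine Module.involutive_preReflection ?_
    rw [LinearMap.smul_apply, polarBilin_apply_apply, polar_self, smul_eq_mul, nsmul_eq_mul,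
      mul_left_comm, Ring.inverse_mul_cancel _ hv, mul_one, Nat.cast_ofNat]
  · rw [Ring.inverse_non_unit _ hv, zero_smul]
    intro x
    simp [Module.preReflection_apply]

/-- The reflection `x ↦ x - (polar Q v x / Q v) • v`; as `(Q v)⁻¹ʳ = 0` when `Q v` is not a unit,
it is then the identity. -/
noncomputable def reflection (v : M) : M ≃ₗ[R] M :=
  LinearEquiv.ofInvolutive _ (Q.involutive_preReflection_polar v)

lemma reflection_apply (v x : M) : Q.reflection v x = x - ((Q v)⁻¹ʳ * polar Q v x) • v := by
  simp [reflection, Module.preReflection_apply, polarBilin_apply_apply]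

lemma reflection_apply_of_polar_eq_zero {v x : M} (h : polar Q v x = 0) :
    Q.reflection v x = x := by
  rw [reflection_apply, h, mul_zero, zero_smul, sub_zero]

lemma reflection_apply_self {v : M} (hv : IsUnit (Q v)) : Q.reflection v v = -v := by
  rw [reflection_apply, polar_self, nsmul_eq_mul, mul_left_comm, Ring.inverse_mul_cancel _ hv]
  module

lemma reflection_sub_apply {u w : M} (h : Q u = Q w) (hu : IsUnit (Q (u - w))) :
    Q.reflection (u - w) u = w := by
  have : polar Q (u - w) u = Q (u - w) := by
    rw [polar_sub_left, polar_self, polar_comm, apply_sub, h, two_nsmul]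
  rw [reflection_apply, this, Ring.inverse_mul_cancel _ hu, one_smul, sub_sub_cancel]

lemma reflection_restrict (W : Submodule R M) (w x : W) :
    ((Q.restrict W).reflection w x : M) = Q.reflection w x := by
  simp [reflection_apply, polar]

lemma isRefl_polarBilin : (polarBilin Q).IsRefl :=
  LinearMap.IsSymm.isRefl ⟨polar_comm Q⟩

def orthogonalGroup : Subgroup (M ≃ₗ[R] M) where
  carrier := {f | ∀ m, Q (f m) = Q m}
  mul_mem' hf hg m := (hf _).trans (hg m)
  one_mem' _ := rfl
  inv_mem' {f} hf m := by
    simpa only [LinearEquiv.coe_inv, LinearEquiv.apply_symm_apply] using (hf (f.symm m)).symm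

variable {Q} in
lemma polar_apply_apply_of_mem_orthogonalGroup {f : M ≃ₗ[R] M} (hf : f ∈ Q.orthogonalGroup)
    (x y : M) : polar Q (f x) (f y) = polar Q x y := by
  simp only [polar, ← map_add, hf _]

lemma reflection_mem_orthogonalGroup (v : M) : Q.reflection v ∈ Q.orthogonalGroup := by
  intro x
  rw [reflection_apply, sub_eq_add_neg, ← neg_smul, QuadraticMap.map_add Q,
    QuadraticMap.map_smul, polar_smul_right, smul_eq_mul, smul_eq_mul, polar_comm Q x v]
  by_cases hv : IsUnit (Q v)
  · linear_combination ((Q v)⁻¹ʳ * polar Q v x * polar Q v x) * Ring.inverse_mul_cancel _ hv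
  · rw [Ring.inverse_non_unit _ hv]
    ring

lemma list_prod_reflection_mem_orthogonalGroup (l : List M) :
    (l.map Q.reflection).prod ∈ Q.orthogonalGroup :=
  Subgroup.list_prod_mem _ fun _ hf ↦ by
    obtain ⟨v, -, rfl⟩ := List.mem_map.mp hf
    exact Q.reflection_mem_orthogonalGroup v

lemma list_prod_reflection_apply_of_forall_polar_eq_zero {l : List M} {x : M}
    (h : ∀ v ∈ l, polar Q v x = 0) : (l.map Q.reflection).prod x = x := by
  suffices (l.map Q.reflection).prod ∈ MulAction.stabilizer (M ≃ₗ[R] M) x from this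
  refine Subgroup.list_prod_mem _ fun _ hf ↦ ?_
  obtain ⟨v, hv, rfl⟩ := List.mem_map.mp hf
  exact Q.reflection_apply_of_polar_eq_zero (h v hv)

lemma list_prod_reflection_restrict (W : Submodule R M) (l : List W) (x : W) :
    ((l.map (Q.restrict W).reflection).prod x : M) =
      ((l.map Subtype.val).map Q.reflection).prod x := by
  induction l with
  | nil => rfl
  | cons w l ih => simp [LinearEquiv.mul_apply, reflection_restrict, ih]

section Field

variable {K V : Type*} [Field K] [AddCommGroup V] [Module K V] (Q : QuadraticForm K V)

lemma exists_apply_ne_zero [Nontrivial V] (hQ : (polarBilin Q).Nondegenerate) :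
    ∃ v, Q v ≠ 0 := by
  by_contra! h
  obtain ⟨x, hx⟩ := exists_ne (0 : V)
  exact hx (hQ.1 x fun y ↦ by simp [polarBilin_apply_apply, polar, h])

lemma exists_list_prod_reflection_apply_eq (h2 : (2 : K) ≠ 0) {u w : V} (h : Q u = Q w)
    (hw : Q w ≠ 0) : ∃ l : List V, (l.map Q.reflection).prod u = w := by
  by_cases huw : Q (u - w) = 0
  · have hneg : Q u = Q (-w) := by rw [QuadraticMap.map_neg, h]
    have hparallelogram : Q (u - w) + Q (u - -w) = 2 * 2 * Q w := by
      rw [apply_sub, apply_sub, polar_neg_right, QuadraticMap.map_neg, h]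
      ring
    have : Q (u - -w) ≠ 0 := by
      rw [huw, zero_add] at hparallelogram
      rw [hparallelogram]
      exact mul_ne_zero (mul_ne_zero h2 h2) hw
    refine ⟨[w, u - -w], ?_⟩
    rw [List.map_cons, List.map_singleton, List.prod_cons, List.prod_singleton,
      LinearEquiv.mul_apply, Q.reflection_sub_apply hneg (isUnit_iff_ne_zero.mpr this), map_neg,
      Q.reflection_apply_self (isUnit_iff_ne_zero.mpr hw), neg_neg]
  · exact ⟨[u - w], by simp [Q.reflection_sub_apply h (isUnit_iff_ne_zero.mpr huw)]⟩

lemma mem_orthogonal_span_singleton_iff {v x : V} :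
    x ∈ LinearMap.BilinForm.orthogonal (polarBilin Q) (K ∙ v) ↔ polar Q v x = 0 := by
  rw [LinearMap.BilinForm.orthogonal_span_singleton_eq_toLin_ker]
  rfl

variable {Q} in
lemma map_orthogonal_span_singleton_eq {g : V ≃ₗ[K] V} (hg : g ∈ Q.orthogonalGroup) {v : V}
    (hgv : g v = v) :
    (LinearMap.BilinForm.orthogonal (polarBilin Q) (K ∙ v)).map (g : V →ₗ[K] V) =
      LinearMap.BilinForm.orthogonal (polarBilin Q) (K ∙ v) := by
  ext x
  rw [Submodule.mem_map_equiv, mem_orthogonal_span_singleton_iff,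
    mem_orthogonal_span_singleton_iff, ← polar_apply_apply_of_mem_orthogonalGroup hg, hgv,
    LinearEquiv.apply_symm_apply]

lemma list_prod_reflection_eq_of_restrict_orthogonal {v : V} (hv : polarBilin Q v v ≠ 0)
    {g : V ≃ₗ[K] V} (hgv : g v = v)
    {l : List (LinearMap.BilinForm.orthogonal (polarBilin Q) (K ∙ v))}
    (hl : ∀ x, ((l.map (Q.restrict _).reflection).prod x : V) = g x) :
    ((l.map Subtype.val).map Q.reflection).prod = g := by
  have hfix : ((l.map Subtype.val).map Q.reflection).prod v = v := by
    refine Q.list_prod_reflection_apply_of_forall_polar_eq_zero fun w hw ↦ ?_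
    obtain ⟨w, -, rfl⟩ := List.mem_map.mp hw
    rw [polar_comm, ← mem_orthogonal_span_singleton_iff]
    exact w.2
  ext x
  have hx : x ∈ (K ∙ v) ⊔ LinearMap.BilinForm.orthogonal (polarBilin Q) (K ∙ v) := by
    rw [LinearMap.BilinForm.span_singleton_sup_orthogonal_eq_top hv]
    trivial
  obtain ⟨y, hy, w, hw, rfl⟩ := Submodule.mem_sup.mp hx
  obtain ⟨a, rfl⟩ := Submodule.mem_span_singleton.mp hy
  rw [map_add, map_add, map_smul, map_smul, hfix, hgv, ← hl ⟨w, hw⟩,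
    Q.list_prod_reflection_restrict]

/-- The Cartan–Dieudonné theorem, without the bound on the number of reflections. -/
theorem exists_list_prod_reflection_eq [FiniteDimensional K V] (h2 : (2 : K) ≠ 0)
    (hQ : (polarBilin Q).Nondegenerate) {g : V ≃ₗ[K] V} (hg : g ∈ Q.orthogonalGroup) :
    ∃ l : List V, (l.map Q.reflection).prod = g := by
  induction hn : Module.finrank K V generalizing V with
  | zero =>
    have := Module.finrank_zero_iff.mp hn
    exact ⟨[], LinearEquiv.ext fun _ ↦ Subsingleton.elim _ _⟩
  | succ n ih =>
    have := Module.nontrivial_of_finrank_eq_succ hn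
    obtain ⟨v, hv⟩ := Q.exists_apply_ne_zero hQ
    obtain ⟨l₀, hl₀⟩ :=
      Q.exists_list_prod_reflection_apply_eq h2 (hg v).symm (by rwa [hg v])
    set h := (l₀.map Q.reflection).prod
    have hg' : h⁻¹ * g ∈ Q.orthogonalGroup :=
      mul_mem (inv_mem (Q.list_prod_reflection_mem_orthogonalGroup l₀)) hg
    have hg'v : (h⁻¹ * g) v = v := by
      rw [LinearEquiv.mul_apply, ← hl₀, LinearEquiv.coe_inv, LinearEquiv.symm_apply_apply]
    have hvv : polarBilin Q v v ≠ 0 := by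
      simpa [polarBilin_apply_apply, polar_self, h2] using hv
    set W := LinearMap.BilinForm.orthogonal (polarBilin Q) (K ∙ v) with hW_def
    have hmap := map_orthogonal_span_singleton_eq hg' hg'v
    have hW : Module.finrank K W = n := by
      have := Submodule.finrank_add_eq_of_isCompl
        (LinearMap.BilinForm.isCompl_span_singleton_orthogonal hvv)
      rw [finrank_span_singleton fun h0 ↦ hv (by rw [h0, QuadraticMap.map_zero]), hn,
        ← hW_def] at this
      omega
    obtain ⟨lW, hlW⟩ := ih (Q.restrict W)
      (LinearMap.BilinForm.restrict_nondegenerate_orthogonal_spanSingleton _ hQ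
        Q.isRefl_polarBilin hvv)
      (g := (h⁻¹ * g).ofSubmodules W W hmap) (fun x ↦ hg' x) hW
    refine ⟨l₀ ++ lW.map Subtype.val, ?_⟩
    rw [List.map_append, List.prod_append, Q.list_prod_reflection_eq_of_restrict_orthogonal hvv
      hg'v fun x ↦ by rw [hlW, LinearEquiv.ofSubmodules_apply], mul_inv_cancel_left]

end Field

section Reduction

variable {R M : Type*} [CommRing R] [AddCommGroup M] [Module R M] (Q : QuadraticForm R M)
  (I : Ideal R)

lemma polar_mem_of_mem_smul_top (x : M) {m : M} (hm : m ∈ I • (⊤ : Submodule R M)) :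
    polar Q x m ∈ I := by
  simpa [Ideal.smul_eq_mul, Ideal.mul_top] using
    Submodule.smul_top_le_comap_smul_top I (polarBilin Q x) hm

lemma apply_mem_of_mem_smul_top {m : M} (hm : m ∈ I • (⊤ : Submodule R M)) : Q m ∈ I := by
  induction hm using Submodule.smul_induction_on' with
  | smul r hr n _ =>
    rw [QuadraticMap.map_smul, smul_eq_mul]
    exact I.mul_mem_right _ (I.mul_mem_right _ hr)
  | add a ha b hb ha' hb' =>
    rw [QuadraticMap.map_add Q]
    exact add_mem (add_mem ha' hb') (Q.polar_mem_of_mem_smul_top I a hb)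

lemma mk_apply_eq_of_mk_eq {x y : M}
    (h : (Submodule.Quotient.mk x : M ⧸ I • (⊤ : Submodule R M)) = Submodule.Quotient.mk y) :
    Ideal.Quotient.mk I (Q x) = Ideal.Quotient.mk I (Q y) := by
  rw [Submodule.Quotient.eq] at h
  rw [Ideal.Quotient.eq, ← sub_add_cancel x y, QuadraticMap.map_add Q, add_right_comm,
    add_sub_cancel_right, polar_comm]
  exact add_mem (Q.apply_mem_of_mem_smul_top I h) (Q.polar_mem_of_mem_smul_top I y h)

def reduction : QuadraticForm (R ⧸ I) (M ⧸ I • (⊤ : Submodule R M)) :=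
  ofPolar (Quotient.lift (fun x ↦ Ideal.Quotient.mk I (Q x))
      fun _ _ h ↦ Q.mk_apply_eq_of_mk_eq I (Quotient.sound h))
    (by
      intro a x
      obtain ⟨r, rfl⟩ := Ideal.Quotient.mk_surjective a
      induction x using Submodule.Quotient.induction_on
      rw [Module.Quotient.mk_smul_mk]
      show Ideal.Quotient.mk I (Q _) = _
      rw [QuadraticMap.map_smul, smul_eq_mul, smul_eq_mul, map_mul, map_mul]
      rfl)
    (by
      intro x x' y
      induction x using Submodule.Quotient.induction_on
      induction x' using Submodule.Quotient.induction_on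
      induction y using Submodule.Quotient.induction_on
      simp only [polar, ← Submodule.Quotient.mk_add]
      exact congrArg (Ideal.Quotient.mk I) (polar_add_left (Q := Q) _ _ _))
    (by
      intro a x y
      obtain ⟨r, rfl⟩ := Ideal.Quotient.mk_surjective a
      induction x using Submodule.Quotient.induction_on
      induction y using Submodule.Quotient.induction_on
      simp only [polar, Module.Quotient.mk_smul_mk, ← Submodule.Quotient.mk_add]
      exact (congrArg (Ideal.Quotient.mk I) (polar_smul_left (Q := Q) _ _ _)).trans
        (map_mul _ _ _))

lemma reduction_mk (x : M) :
    Q.reduction I (Submodule.Quotient.mk x) = Ideal.Quotient.mk I (Q x) := rfl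

lemma polar_reduction_mk (x y : M) :
    polar (Q.reduction I) (Submodule.Quotient.mk x) (Submodule.Quotient.mk y) =
      Ideal.Quotient.mk I (polar Q x y) := by
  simp only [polar, ← Submodule.Quotient.mk_add, reduction_mk, map_sub]

lemma _root_.Module.Dual.mem_smul_top_of_forall_apply_mem [Module.Free R M] [Module.Finite R M]
    {f : Module.Dual R M} (hf : ∀ x, f x ∈ I) :
    f ∈ I • (⊤ : Submodule R (Module.Dual R M)) := by
  rw [← (Module.Free.chooseBasis R M).sum_dual_apply_smul_coord f]
  exact sum_mem fun i _ ↦ smul_mem_smul (hf _) mem_top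

lemma separatingLeft_polarBilin_reduction [Module.Free R M] [Module.Finite R M]
    (hQ : Function.Bijective (polarBilin Q)) : (polarBilin (Q.reduction I)).SeparatingLeft := by
  intro x hx
  induction x using Submodule.Quotient.induction_on with | _ x
  have hdual : polarBilin Q x ∈ I • (⊤ : Submodule R (Module.Dual R M)) :=
    Module.Dual.mem_smul_top_of_forall_apply_mem I fun y ↦ by
      simpa [polarBilin_apply_apply, polar_reduction_mk, Ideal.Quotient.eq_zero_iff_mem]
        using hx (Submodule.Quotient.mk y)
  have := smul_top_le_comap_smul_top I (LinearEquiv.ofBijective _ hQ).symm.toLinearMap hdual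
  rw [mem_comap] at this
  rw [Submodule.Quotient.mk_eq_zero]
  simpa using this

lemma reflection_reduction_mk [IsLocalHom (Ideal.Quotient.mk I)] (v x : M) :
    (Q.reduction I).reflection (Submodule.Quotient.mk v) (Submodule.Quotient.mk x) =
      Submodule.Quotient.mk (Q.reflection v x) := by
  rw [reflection_apply, reflection_apply, reduction_mk, polar_reduction_mk, ← map_ringInverse,
    ← map_mul, Module.Quotient.mk_smul_mk, Submodule.Quotient.mk_sub]

lemma list_prod_reflection_reduction_mk [IsLocalHom (Ideal.Quotient.mk I)] (l : List M) (x : M) :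
    (l.map fun v ↦ (Q.reduction I).reflection (Submodule.Quotient.mk v)).prod
        (Submodule.Quotient.mk x) = Submodule.Quotient.mk ((l.map Q.reflection).prod x) := by
  induction l with
  | nil => rfl
  | cons v l ih =>
    simp only [List.map_cons, List.prod_cons, LinearEquiv.mul_apply, ih, reflection_reduction_mk]

end Reduction

end QuadraticMap

/-- Let `R` be a local ring with maximal ideal `𝔪` and residue field `k = R/𝔪` of
characteristic `≠ 2`, and let `M` be a free `R`-module of finite rank with a non-degenerate
quadratic form `Q`.  Then the reduction homomorphism `O_R(M) → O_k(M̄)` is surjective: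
every `k`-linear automorphism `g` of `M̄ = M/𝔪M` preserving the reduced form `Q̄` (i.e.
`Q̄(g x̄) = Q̄(x̄)`, expressed on lifts) lifts to an `R`-linear automorphism `f` of `M`
preserving `Q` whose reduction modulo `𝔪` is `g`. -/
theorem orthogonal_group_reduction_surjective
    {R M : Type*} [CommRing R] [IsLocalRing R] [AddCommGroup M] [Module R M]
    [Module.Free R M] [Module.Finite R M]
    (hchar : ringChar (ResidueField R) ≠ 2)
    (Q : QuadraticForm R M) (hQ : Function.Bijective ⇑(QuadraticMap.polarBilin Q))
    (g : (M ⧸ (maximalIdeal R • ⊤ : Submodule R M)) ≃ₗ[R ⧸ maximalIdeal R]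
         (M ⧸ (maximalIdeal R • ⊤ : Submodule R M)))
    (hg : ∀ x y : M, g (Submodule.Quotient.mk x) = Submodule.Quotient.mk y →
      Ideal.Quotient.mk (maximalIdeal R) (Q y) = Ideal.Quotient.mk (maximalIdeal R) (Q x)) :
    ∃ f : M ≃ₗ[R] M, (∀ m : M, Q (f m) = Q m) ∧
      ∀ x : M, g (Submodule.Quotient.mk x) = Submodule.Quotient.mk (f x) := by
  let _ : Field (R ⧸ maximalIdeal R) := Ideal.Quotient.field _
  have : IsLocalHom (Ideal.Quotient.mk (maximalIdeal R)) :=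
    inferInstanceAs (IsLocalHom (residue R))
  set Qk := Q.reduction (maximalIdeal R)
  have hQk : (QuadraticMap.polarBilin Qk).Nondegenerate :=
    Qk.isRefl_polarBilin.nondegenerate_iff_separatingLeft.mpr
      (Q.separatingLeft_polarBilin_reduction _ hQ)
  have hgQk : g ∈ Qk.orthogonalGroup := by
    intro x
    induction x using Submodule.Quotient.induction_on with | _ x
    obtain ⟨y, hy⟩ := Submodule.Quotient.mk_surjective _ (g (Submodule.Quotient.mk x))
    rw [← hy]
    exact hg x y hy.symm
  obtain ⟨l, rfl⟩ := Qk.exists_list_prod_reflection_eq (Ring.two_ne_zero hchar) hQk hgQk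
  choose lift hlift using Submodule.Quotient.mk_surjective (maximalIdeal R • ⊤ : Submodule R M)
  refine ⟨((l.map lift).map Q.reflection).prod,
    Q.list_prod_reflection_mem_orthogonalGroup _, fun x ↦ ?_⟩
  rw [← Q.list_prod_reflection_reduction_mk, List.map_map]
  simp only [Function.comp_def, hlift]
  rfl
end

section
/- Let k be a field of characteristic different from 2, let n > 2, let α_1,…,α_n be nonzero elements of k, and let Q(T_1,…,T_n) = α_1T_1² + … + α_nT_n² with associated bilinear form B(u,v) = Σ_i α_i u_i v_i. Let v = (v_1,…,v_n) ∈ k^n be a vector such that v_i ≠ 0 for some index i < n. Then there exists a vector u = (u_1,…,u_n) ∈ k^n such that B(u,v) ≠ 0, Q(u) ≠ 0, and u_n ≠ 0. -/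
/-! Write `ℓ` for the last index and pick `i < ℓ` with `v i ≠ 0`. For any `x` with `x i = 0`, the
vectors `x ± eᵢ` have the same value `Q x + αᵢ` of `Q`, while their pairings with `v` differ by
`2 αᵢ vᵢ ≠ 0`, so one of them pairs nontrivially with `v`. It remains to take `x = e_ℓ` when
`αᵢ + α_ℓ ≠ 0`, and otherwise `x = e_ℓ + eⱼ` for a third index `j`, where `Q x + αᵢ = αⱼ ≠ 0`. -/

section DiagonalForm

variable {k ι : Type*} [Fintype ι] [DecidableEq ι]

theorem sum_mul_add_single_mul [CommSemiring k] (α x v : ι → k) (i : ι) (s : k) :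
    ∑ m, α m * (x + Pi.single i s : ι → k) m * v m = ∑ m, α m * x m * v m + α i * s * v i := by
  simp only [Pi.add_apply, add_mul, mul_add, Finset.sum_add_distrib, Pi.single_apply,
    mul_ite, ite_mul, mul_zero, zero_mul, Finset.sum_ite_eq', Finset.mem_univ, if_true]

theorem sum_mul_add_single_sq [CommSemiring k] (α : ι → k) {x : ι → k} {i : ι} (hx : x i = 0)
    (s : k) :
    ∑ m, α m * (x + Pi.single i s : ι → k) m ^ 2 = ∑ m, α m * x m ^ 2 + α i * s ^ 2 := by
  have hsplit : ∀ m, α m * (x + Pi.single i s : ι → k) m ^ 2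
      = α m * x m ^ 2 + (if m = i then α i * s ^ 2 else 0) := by
    intro m
    by_cases hm : m = i
    · subst hm; simp [hx]
    · simp [hm]
  simp only [hsplit, Finset.sum_add_distrib, Finset.sum_ite_eq', Finset.mem_univ, if_true]

theorem sum_mul_single_sq [CommSemiring k] (α : ι → k) (i : ι) (s : k) :
    ∑ m, α m * (Pi.single i s : ι → k) m ^ 2 = α i * s ^ 2 := by
  simpa using sum_mul_add_single_sq α (x := 0) (i := i) rfl s

theorem exists_sum_mul_add_single_mul_ne_zero [CommRing k] [NoZeroDivisors k]
    (h2 : (2 : k) ≠ 0) (α x v : ι → k) {i : ι} (hαv : α i * v i ≠ 0) :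
    ∃ s : k, s ^ 2 = 1 ∧ ∑ m, α m * (x + Pi.single i s : ι → k) m * v m ≠ 0 := by
  simp only [sum_mul_add_single_mul]
  by_contra! h
  have hplus := h 1 (one_pow 2)
  have hminus := h (-1) (by norm_num)
  exact mul_ne_zero h2 hαv (by linear_combination hplus - hminus)

end DiagonalForm

/-- Let `k` be a field of characteristic `≠ 2`, `n > 2`, `α 0, …, α (n-1)` nonzero elements
of `k`, and let `Q(T) = ∑ i, α i * (T i)²` with associated bilinear form
`B(u, v) = ∑ i, α i * u i * v i`.  If `v ∈ kⁿ` has a nonzero coordinate `v i` with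
`i < n - 1` (i.e. not the last one), then there exists `u ∈ kⁿ` with `B(u, v) ≠ 0`,
`Q(u) ≠ 0` and whose last coordinate is nonzero. -/
theorem exists_reflection_vector
    {k : Type*} [Field k] (hchar : ringChar k ≠ 2)
    {n : ℕ} (hn : 2 < n) (α : Fin n → k) (hα : ∀ i, α i ≠ 0)
    (v : Fin n → k) (hv : ∃ i : Fin n, (i : ℕ) < n - 1 ∧ v i ≠ 0) :
    ∃ u : Fin n → k,
      (∑ i, α i * u i * v i) ≠ 0 ∧
      (∑ i, α i * u i ^ 2) ≠ 0 ∧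
      u ⟨n - 1, by omega⟩ ≠ 0 := by
  obtain ⟨i, hi, hvi⟩ := hv
  set ℓ : Fin n := ⟨n - 1, by omega⟩
  have hiℓ : i ≠ ℓ := Fin.ne_of_val_ne hi.ne
  obtain ⟨j, hji, hjℓ⟩ := Fin.exists_ne_and_ne_of_two_lt i ℓ hn
  obtain ⟨x, hxi, hxℓ, hQx⟩ : ∃ x : Fin n → k,
      x i = 0 ∧ x ℓ = 1 ∧ ∑ m, α m * x m ^ 2 + α i ≠ 0 := by
    by_cases hαiℓ : α i + α ℓ = 0
    · refine ⟨Pi.single ℓ 1 + Pi.single j 1, by simp [hiℓ, hji.symm], by simp [hjℓ.symm], ?_⟩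
      rw [sum_mul_add_single_sq α (x := Pi.single ℓ 1) (i := j) (by simp [hjℓ]),
        sum_mul_single_sq]
      exact fun h => hα j (by linear_combination h - hαiℓ)
    · refine ⟨Pi.single ℓ 1, by simp [hiℓ], by simp, ?_⟩
      rw [sum_mul_single_sq]
      exact fun h => hαiℓ (by linear_combination h)
  obtain ⟨s, hs, hB⟩ := exists_sum_mul_add_single_mul_ne_zero (Ring.two_ne_zero hchar) α x v
    (mul_ne_zero (hα i) hvi)
  refine ⟨x + Pi.single i s, hB, ?_, by simp [hxℓ, hiℓ.symm]⟩
  rwa [sum_mul_add_single_sq α hxi, hs, mul_one]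
end
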